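/- Let n ≥ 1, let a, b ∈ ℝ and let C ∈ M_n(ℝ). If the real block matrix [[a·I_n, C],[Cᵗ, b·I_n]] is positive semidefinite, then the block matrix [[a·I_n, Cᵗ],[C, b·I_n]] is positive semidefinite. (That is, the map Υ_n on the real operator system S_n is positivity preserving.) -/

import Mathlib

open Matrix

/-!
Positivity of `[[a•I, C], [Cᵀ, b•I]]` means `a ‖u‖² + b ‖v‖² + 2 ⟪u, C v⟫ ≥ 0` for all `u, v`.
Replacing `u` by `t • u` and taking the discriminant in `t` gives `⟪u, C v⟫² ≤ ab ‖u‖² ‖v‖²`,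
a bound symmetric in `u` and `v`. Since `a ‖u‖²` and `b ‖v‖²` are themselves nonnegative
(take `v = 0`, resp. `u = 0`), AM-GM turns the bound for `⟪v, C u⟫` into the inequality
for `Cᵀ`, that is `a ‖u‖² + b ‖v‖² + 2 ⟪v, C u⟫ ≥ 0`.
-/

lemma neg_two_mul_le_add_of_sq_le_mul {x y s : ℝ} (hx : 0 ≤ x) (hy : 0 ≤ y) (h : s ^ 2 ≤ x * y) :
    -(2 * s) ≤ x + y := by
  nlinarith [sq_nonneg (x - y), sq_nonneg (x + y + 2 * s)]

section BlockForm

variable {ι κ : Type*} [Fintype ι] [Fintype κ]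

lemma posSemidef_fromBlocks_smul_one_iff [DecidableEq ι] [DecidableEq κ] (a b : ℝ)
    (C : Matrix ι κ ℝ) :
    (fromBlocks (a • (1 : Matrix ι ι ℝ)) C Cᵀ (b • (1 : Matrix κ κ ℝ))).PosSemidef ↔
      ∀ u v, 0 ≤ a * (u ⬝ᵥ u) + b * (v ⬝ᵥ v) + 2 * (u ⬝ᵥ C *ᵥ v) := by
  have hHerm : (fromBlocks (a • (1 : Matrix ι ι ℝ)) C Cᵀ (b • (1 : Matrix κ κ ℝ))).IsHermitian :=
    isHermitian_fromBlocks_iff.mpr ⟨by simp [IsHermitian], rfl, rfl, by simp [IsHermitian]⟩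
  have hform : ∀ u v, Sum.elim u v ⬝ᵥ
      fromBlocks (a • (1 : Matrix ι ι ℝ)) C Cᵀ (b • (1 : Matrix κ κ ℝ)) *ᵥ Sum.elim u v =
      a * (u ⬝ᵥ u) + b * (v ⬝ᵥ v) + 2 * (u ⬝ᵥ C *ᵥ v) := by
    intro u v
    simp only [fromBlocks_mulVec, sumElim_dotProduct_sumElim, Sum.elim_comp_inl,
      Sum.elim_comp_inr, dotProduct_add, smul_mulVec, one_mulVec, dotProduct_smul, smul_eq_mul,
      dotProduct_transpose_mulVec]
    ring
  rw [posSemidef_iff_dotProduct_mulVec]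
  refine ⟨fun ⟨_, hnonneg⟩ u v => hform u v ▸ by simpa using hnonneg (Sum.elim u v),
    fun hq => ⟨hHerm, fun x => ?_⟩⟩
  rw [star_trivial, ← Sum.elim_comp_inl_inr x, hform]
  exact hq _ _

lemma sq_dotProduct_mulVec_le_of_forall_nonneg {a b : ℝ} {C : Matrix ι κ ℝ}
    (h : ∀ u v, 0 ≤ a * (u ⬝ᵥ u) + b * (v ⬝ᵥ v) + 2 * (u ⬝ᵥ C *ᵥ v)) (u : ι → ℝ) (v : κ → ℝ) :
    (u ⬝ᵥ C *ᵥ v) ^ 2 ≤ a * (u ⬝ᵥ u) * (b * (v ⬝ᵥ v)) := by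
  have hquad : ∀ t : ℝ,
      0 ≤ a * (u ⬝ᵥ u) * (t * t) + 2 * (u ⬝ᵥ C *ᵥ v) * t + b * (v ⬝ᵥ v) := by
    intro t
    have := h (t • u) v
    simp only [smul_dotProduct, dotProduct_smul, smul_eq_mul] at this
    linarith
  have := discrim_le_zero hquad
  rw [discrim] at this
  linarith

end BlockForm

theorem stmt6_general (n : ℕ) (a b : ℝ) (C : Matrix (Fin n) (Fin n) ℝ)
    (h : (Matrix.fromBlocks (a • (1 : Matrix (Fin n) (Fin n) ℝ)) C
      Cᵀ (b • (1 : Matrix (Fin n) (Fin n) ℝ))).PosSemidef) :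
    (Matrix.fromBlocks (a • (1 : Matrix (Fin n) (Fin n) ℝ)) Cᵀ
      C (b • (1 : Matrix (Fin n) (Fin n) ℝ))).PosSemidef := by
  rw [posSemidef_fromBlocks_smul_one_iff] at h
  have htarget := posSemidef_fromBlocks_smul_one_iff a b Cᵀ
  rw [transpose_transpose] at htarget
  rw [htarget]
  intro u v
  have hau : 0 ≤ a * (u ⬝ᵥ u) := by simpa using h u 0
  have hbv : 0 ≤ b * (v ⬝ᵥ v) := by simpa using h 0 v
  have hcs : (v ⬝ᵥ C *ᵥ u) ^ 2 ≤ a * (u ⬝ᵥ u) * (b * (v ⬝ᵥ v)) :=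
    (sq_dotProduct_mulVec_le_of_forall_nonneg h v u).trans_eq (by ring)
  rw [dotProduct_transpose_mulVec]
  linarith [neg_two_mul_le_add_of_sq_le_mul hau hbv hcs]

/-- The map `Υ_n` on the real operator system `S_n` is positivity preserving: if the
real block matrix `[[a•I, C], [Cᵗ, b•I]]` is positive semidefinite, then so is
`[[a•I, Cᵗ], [C, b•I]]`. -/
theorem stmt6 (n : ℕ) (hn : 1 ≤ n) (a b : ℝ) (C : Matrix (Fin n) (Fin n) ℝ)
    (h : (Matrix.fromBlocks (a • (1 : Matrix (Fin n) (Fin n) ℝ)) C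
      Cᵀ (b • (1 : Matrix (Fin n) (Fin n) ℝ))).PosSemidef) :
    (Matrix.fromBlocks (a • (1 : Matrix (Fin n) (Fin n) ℝ)) Cᵀ
      C (b • (1 : Matrix (Fin n) (Fin n) ℝ))).PosSemidef :=
  stmt6_general n a b C h
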